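/- arXiv:1612.09362 — 2 statements merged into one kernel-verified Lean document; each statement's English description precedes it below -/
import Mathlib

section
/- Let ξ ∈ F^× be a unit with 0 < |σ(ξ)| ≤ |ξ|, let c₁, c₂ > 0, and define c′ = max{c₁|σ(ξ)|/|ξ| + c₂|ξ|/|σ(ξ)|, c₂|σ(ξ)|/|ξ| + c₁|ξ|/|σ(ξ)|}. Let α, w, c ∈ O_F be nonzero elements satisfying N(w) ≤ N(α), |σ(ξ)| ≤ |σ(w)|/|w| ≤ |ξ|, |σ(ξ)| ≤ |σ(α)|/|α| ≤ |ξ|, |c| ≤ c₁|α| and |σ(c)| ≤ c₂|σ(α)|. Then |c·σ(w)| + |w·σ(c)| ≤ c′·N(α)^(1/2). -/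
open IntermediateField NumberField

noncomputable section

/-- `β = i·√(D + B√D)` (positive real square roots). -/
def qβ (B D : ℕ) : ℂ :=
  Complex.I * ((Real.sqrt ((D : ℝ) + (B : ℝ) * Real.sqrt (D : ℝ)) : ℝ) : ℂ)

/-- `β₃ = i·√(D − B√D)`. -/
def qβ₃ (B D : ℕ) : ℂ :=
  Complex.I * ((Real.sqrt ((D : ℝ) - (B : ℝ) * Real.sqrt (D : ℝ)) : ℝ) : ℂ)

/-- The imaginary cyclic quartic field `F = ℚ(β) = ℚ(√(−(D + B√D))) ⊆ ℂ`. -/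
def qF (B D : ℕ) : IntermediateField ℚ ℂ := ℚ⟮qβ B D⟯

/-- The complex absolute value of an element of `F`, via the inclusion `F ⊆ ℂ`. -/
def qAbs {B D : ℕ} (x : qF B D) : ℝ := ‖(x : ℂ)‖

/-- `N(x) = |x|²·|σ(x)|²`, the absolute value of the field norm of `x ∈ F`. -/
def qNorm {B D : ℕ} (σ : qF B D ≃ₐ[ℚ] qF B D) (x : qF B D) : ℝ :=
  qAbs x ^ 2 * qAbs (σ x) ^ 2


/-!
Put `p = |σ w| / |σ α|`, `q = |w| / |α|` and `u = |ξ| / |σ ξ| ≥ 1`. The bounds on `c` reduce the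
claim to `c₁ p + c₂ q ≤ c'`, while the hypotheses say `p q ≤ 1` (this is `N(w) ≤ N(α)`) and
`u⁻¹ ≤ p / q ≤ u`. Together these force `p, q ≤ u`, so `(u - p)(u - q) ≥ 0` gives
`p + q ≤ u + u⁻¹`. If `c₂ ≤ c₁`, writing `c₁ p + c₂ q = (c₁ - c₂) p + c₂ (p + q)` bounds it by
`c₁ u + c₂ u⁻¹ ≤ c'`; the case `c₁ ≤ c₂` is symmetric.
-/

section WeightedBound

variable {c₁ c₂ p q u : ℝ}

theorem le_of_le_mul_of_mul_le_one (hu : 1 ≤ u) (hp : 0 ≤ p) (hpq : p * q ≤ 1)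
    (h : p ≤ u * q) : p ≤ u := by
  nlinarith [mul_le_mul_of_nonneg_left h hp]

theorem add_le_add_inv_of_mul_le_one (hu : 0 < u) (hp : p ≤ u) (hq : q ≤ u)
    (hpq : p * q ≤ 1) : p + q ≤ u + u⁻¹ := by
  have hcorner : 0 ≤ (u - p) * (u - q) := mul_nonneg (sub_nonneg.2 hp) (sub_nonneg.2 hq)
  rw [← mul_le_mul_iff_of_pos_left hu, mul_add, mul_add, mul_inv_cancel₀ hu.ne']
  nlinarith

theorem mul_add_mul_le_max_of_mul_le_one (hc₁ : 0 ≤ c₁) (hc₂ : 0 ≤ c₂) (hu : 1 ≤ u)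
    (hp : 0 ≤ p) (hq : 0 ≤ q) (hpq : p * q ≤ 1) (hpu : p ≤ u * q) (hqu : q ≤ u * p) :
    c₁ * p + c₂ * q ≤ max (c₁ * u⁻¹ + c₂ * u) (c₂ * u⁻¹ + c₁ * u) := by
  have hu₀ : 0 < u := zero_lt_one.trans_le hu
  have hp_le : p ≤ u := le_of_le_mul_of_mul_le_one hu hp hpq hpu
  have hq_le : q ≤ u := le_of_le_mul_of_mul_le_one hu hq (by rwa [mul_comm]) hqu
  have hsum : p + q ≤ u + u⁻¹ := add_le_add_inv_of_mul_le_one hu₀ hp_le hq_le hpq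
  rcases le_total c₂ c₁ with hc | hc
  · refine le_max_of_le_right ?_
    nlinarith [mul_le_mul_of_nonneg_left hp_le (sub_nonneg.2 hc),
      mul_le_mul_of_nonneg_left hsum hc₂]
  · refine le_max_of_le_left ?_
    nlinarith [mul_le_mul_of_nonneg_left hq_le (sub_nonneg.2 hc),
      mul_le_mul_of_nonneg_left hsum hc₁]

end WeightedBound

theorem mul_add_mul_le_max_mul {a a' v v' x x' c₁ c₂ : ℝ} (ha : 0 < a) (ha' : 0 < a')
    (hv : 0 < v) (hx' : 0 < x') (hx : x' ≤ x) (hc₁ : 0 ≤ c₁) (hc₂ : 0 ≤ c₂)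
    (hN : v * v' ≤ a * a') (hv₁ : x' ≤ v' / v) (hv₂ : v' / v ≤ x) (ha₁ : x' ≤ a' / a)
    (ha₂ : a' / a ≤ x) :
    c₁ * a * v' + c₂ * a' * v ≤
      max (c₁ * x' / x + c₂ * x / x') (c₂ * x' / x + c₁ * x / x') * (a * a') := by
  have hv' : 0 < v' := (div_pos_iff_of_pos_right hv).mp (hx'.trans_le hv₁)
  set p := v' / a'
  set q := v / a
  set u := x / x'
  have hpq_ratio : p = (v' / v) / (a' / a) * q := by
    simp only [p, q]; field_simp
  have hqp_ratio : q = (a' / a) / (v' / v) * p := by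
    simp only [p, q]; field_simp
  have hpq : p * q ≤ 1 := by
    rw [div_mul_div_comm, div_le_one (mul_pos ha' ha)]
    linarith
  have hpu : p ≤ u * q := by
    rw [hpq_ratio]
    gcongr
    exact div_le_div₀ (hx'.le.trans hx) hv₂ hx' ha₁
  have hqu : q ≤ u * p := by
    rw [hqp_ratio]
    gcongr
    exact div_le_div₀ (hx'.le.trans hx) ha₂ hx' hv₁
  have hbound := mul_add_mul_le_max_of_mul_le_one hc₁ hc₂ ((one_le_div hx').2 hx)
    (div_pos hv' ha').le (div_pos hv ha).le hpq hpu hqu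
  simp only [inv_div, mul_div_assoc] at hbound ⊢
  calc c₁ * a * v' + c₂ * a' * v = (c₁ * p + c₂ * q) * (a * a') := by
        simp only [p, q]; field_simp
    _ ≤ _ := by gcongr

theorem qAbs_nonneg {B D : ℕ} (x : qF B D) : 0 ≤ qAbs x :=
  norm_nonneg _

theorem qAbs_pos {B D : ℕ} {x : qF B D} (hx : x ≠ 0) : 0 < qAbs x :=
  norm_pos_iff.mpr (by simpa using hx)

theorem qNorm_eq_sq {B D : ℕ} (σ : qF B D ≃ₐ[ℚ] qF B D) (x : qF B D) :
    qNorm σ x = (qAbs x * qAbs (σ x)) ^ 2 := by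
  rw [qNorm, mul_pow]

theorem qNorm_rpow_half {B D : ℕ} (σ : qF B D ≃ₐ[ℚ] qF B D) (x : qF B D) :
    qNorm σ x ^ ((1 : ℝ) / 2) = qAbs x * qAbs (σ x) := by
  rw [← Real.sqrt_eq_rpow, qNorm_eq_sq, Real.sqrt_sq (mul_nonneg (qAbs_nonneg _) (qAbs_nonneg _))]

theorem qAbs_mul_le_of_qNorm_le {B D : ℕ} {σ : qF B D ≃ₐ[ℚ] qF B D} {x y : qF B D}
    (h : qNorm σ x ≤ qNorm σ y) : qAbs x * qAbs (σ x) ≤ qAbs y * qAbs (σ y) := by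
  rw [qNorm_eq_sq, qNorm_eq_sq] at h
  exact (pow_le_pow_iff_left₀ (mul_nonneg (qAbs_nonneg _) (qAbs_nonneg _))
    (mul_nonneg (qAbs_nonneg _) (qAbs_nonneg _)) two_ne_zero).mp h

theorem statement15_general (B D : ℕ)
    (σ : qF B D ≃ₐ[ℚ] qF B D)
    (ξ : (𝓞 (qF B D))ˣ)
    (hσξpos : 0 < qAbs (σ ((ξ : 𝓞 (qF B D)) : qF B D)))
    (hσξle : qAbs (σ ((ξ : 𝓞 (qF B D)) : qF B D)) ≤ qAbs ((ξ : 𝓞 (qF B D)) : qF B D))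
    (c₁ c₂ : ℝ) (hc₁ : 0 < c₁) (hc₂ : 0 < c₂)
    (c' : ℝ)
    (hc' : c' = max
      (c₁ * qAbs (σ ((ξ : 𝓞 (qF B D)) : qF B D)) / qAbs ((ξ : 𝓞 (qF B D)) : qF B D) +
        c₂ * qAbs ((ξ : 𝓞 (qF B D)) : qF B D) / qAbs (σ ((ξ : 𝓞 (qF B D)) : qF B D)))
      (c₂ * qAbs (σ ((ξ : 𝓞 (qF B D)) : qF B D)) / qAbs ((ξ : 𝓞 (qF B D)) : qF B D) +
        c₁ * qAbs ((ξ : 𝓞 (qF B D)) : qF B D) / qAbs (σ ((ξ : 𝓞 (qF B D)) : qF B D))))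
    (α w c : 𝓞 (qF B D)) (hα : α ≠ 0) (hw : w ≠ 0)
    (hNw : qNorm σ ((w : 𝓞 (qF B D)) : qF B D) ≤ qNorm σ ((α : 𝓞 (qF B D)) : qF B D))
    (hw1 : qAbs (σ ((ξ : 𝓞 (qF B D)) : qF B D)) ≤
      qAbs (σ ((w : 𝓞 (qF B D)) : qF B D)) / qAbs ((w : 𝓞 (qF B D)) : qF B D))
    (hw2 : qAbs (σ ((w : 𝓞 (qF B D)) : qF B D)) / qAbs ((w : 𝓞 (qF B D)) : qF B D) ≤
      qAbs ((ξ : 𝓞 (qF B D)) : qF B D))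
    (hα1 : qAbs (σ ((ξ : 𝓞 (qF B D)) : qF B D)) ≤
      qAbs (σ ((α : 𝓞 (qF B D)) : qF B D)) / qAbs ((α : 𝓞 (qF B D)) : qF B D))
    (hα2 : qAbs (σ ((α : 𝓞 (qF B D)) : qF B D)) / qAbs ((α : 𝓞 (qF B D)) : qF B D) ≤
      qAbs ((ξ : 𝓞 (qF B D)) : qF B D))
    (hcb : qAbs ((c : 𝓞 (qF B D)) : qF B D) ≤ c₁ * qAbs ((α : 𝓞 (qF B D)) : qF B D))
    (hσcb : qAbs (σ ((c : 𝓞 (qF B D)) : qF B D)) ≤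
      c₂ * qAbs (σ ((α : 𝓞 (qF B D)) : qF B D))) :
    ‖((((c : 𝓞 (qF B D)) : qF B D) : ℂ) *
        ((σ ((w : 𝓞 (qF B D)) : qF B D) : qF B D) : ℂ))‖ +
      ‖((((w : 𝓞 (qF B D)) : qF B D) : ℂ) *
        ((σ ((c : 𝓞 (qF B D)) : qF B D) : qF B D) : ℂ))‖ ≤
      c' * qNorm σ ((α : 𝓞 (qF B D)) : qF B D) ^ ((1 : ℝ) / 2) := by
  have hαF : (α : qF B D) ≠ 0 := RingOfIntegers.coe_ne_zero_iff.mpr hα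
  have hwF : (w : qF B D) ≠ 0 := RingOfIntegers.coe_ne_zero_iff.mpr hw
  have hbound := mul_add_mul_le_max_mul (qAbs_pos hαF) (qAbs_pos ((map_ne_zero σ).mpr hαF))
    (qAbs_pos hwF) hσξpos hσξle hc₁.le hc₂.le (qAbs_mul_le_of_qNorm_le hNw) hw1 hw2 hα1 hα2
  rw [norm_mul, norm_mul, qNorm_rpow_half, hc']
  refine le_trans ?_ hbound
  change qAbs _ * qAbs _ + qAbs _ * qAbs _ ≤ _
  linarith [mul_le_mul_of_nonneg_right hcb (qAbs_nonneg (σ w)),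
    mul_le_mul_of_nonneg_left hσcb (qAbs_nonneg (w : qF B D))]

/-- Let `ξ` be a unit with `0 < |σ(ξ)| ≤ |ξ|`, let `c₁, c₂ > 0`, and
`c′ = max{c₁|σ(ξ)|/|ξ| + c₂|ξ|/|σ(ξ)|, c₂|σ(ξ)|/|ξ| + c₁|ξ|/|σ(ξ)|}`. If the nonzero
`α, w, c ∈ O_F` satisfy `N(w) ≤ N(α)`, `|σ(ξ)| ≤ |σ(w)|/|w| ≤ |ξ|`,
`|σ(ξ)| ≤ |σ(α)|/|α| ≤ |ξ|`, `|c| ≤ c₁|α|` and `|σ(c)| ≤ c₂|σ(α)|`, then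
`|c·σ(w)| + |w·σ(c)| ≤ c′·N(α)^(1/2)`. -/
theorem statement15 (B C D : ℕ) (hB : 0 < B) (hC : 0 < C) (hD : D = B ^ 2 + C ^ 2)
    (hsf : Squarefree D)
    (σ : qF B D ≃ₐ[ℚ] qF B D)
    (hσ : ((σ ⟨qβ B D, mem_adjoin_simple_self ℚ (qβ B D)⟩ : qF B D) : ℂ) = -(qβ₃ B D))
    (ξ : (𝓞 (qF B D))ˣ)
    (hσξpos : 0 < qAbs (σ ((ξ : 𝓞 (qF B D)) : qF B D)))
    (hσξle : qAbs (σ ((ξ : 𝓞 (qF B D)) : qF B D)) ≤ qAbs ((ξ : 𝓞 (qF B D)) : qF B D))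
    (c₁ c₂ : ℝ) (hc₁ : 0 < c₁) (hc₂ : 0 < c₂)
    (c' : ℝ)
    (hc' : c' = max
      (c₁ * qAbs (σ ((ξ : 𝓞 (qF B D)) : qF B D)) / qAbs ((ξ : 𝓞 (qF B D)) : qF B D) +
        c₂ * qAbs ((ξ : 𝓞 (qF B D)) : qF B D) / qAbs (σ ((ξ : 𝓞 (qF B D)) : qF B D)))
      (c₂ * qAbs (σ ((ξ : 𝓞 (qF B D)) : qF B D)) / qAbs ((ξ : 𝓞 (qF B D)) : qF B D) +
        c₁ * qAbs ((ξ : 𝓞 (qF B D)) : qF B D) / qAbs (σ ((ξ : 𝓞 (qF B D)) : qF B D))))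
    (α w c : 𝓞 (qF B D)) (hα : α ≠ 0) (hw : w ≠ 0) (hcne : c ≠ 0)
    (hNw : qNorm σ ((w : 𝓞 (qF B D)) : qF B D) ≤ qNorm σ ((α : 𝓞 (qF B D)) : qF B D))
    (hw1 : qAbs (σ ((ξ : 𝓞 (qF B D)) : qF B D)) ≤
      qAbs (σ ((w : 𝓞 (qF B D)) : qF B D)) / qAbs ((w : 𝓞 (qF B D)) : qF B D))
    (hw2 : qAbs (σ ((w : 𝓞 (qF B D)) : qF B D)) / qAbs ((w : 𝓞 (qF B D)) : qF B D) ≤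
      qAbs ((ξ : 𝓞 (qF B D)) : qF B D))
    (hα1 : qAbs (σ ((ξ : 𝓞 (qF B D)) : qF B D)) ≤
      qAbs (σ ((α : 𝓞 (qF B D)) : qF B D)) / qAbs ((α : 𝓞 (qF B D)) : qF B D))
    (hα2 : qAbs (σ ((α : 𝓞 (qF B D)) : qF B D)) / qAbs ((α : 𝓞 (qF B D)) : qF B D) ≤
      qAbs ((ξ : 𝓞 (qF B D)) : qF B D))
    (hcb : qAbs ((c : 𝓞 (qF B D)) : qF B D) ≤ c₁ * qAbs ((α : 𝓞 (qF B D)) : qF B D))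
    (hσcb : qAbs (σ ((c : 𝓞 (qF B D)) : qF B D)) ≤
      c₂ * qAbs (σ ((α : 𝓞 (qF B D)) : qF B D))) :
    ‖((((c : 𝓞 (qF B D)) : qF B D) : ℂ) *
        ((σ ((w : 𝓞 (qF B D)) : qF B D) : qF B D) : ℂ))‖ +
      ‖((((w : 𝓞 (qF B D)) : qF B D) : ℂ) *
        ((σ ((c : 𝓞 (qF B D)) : qF B D) : qF B D) : ℂ))‖ ≤
      c' * qNorm σ ((α : 𝓞 (qF B D)) : qF B D) ^ ((1 : ℝ) / 2) :=
  statement15_general B D σ ξ hσξpos hσξle c₁ c₂ hc₁ hc₂ c' hc' α w c hα hw hNw hw1 hw2 hα1 hα2 hcb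
    hσcb
end
end

section
/- Let δ > 0, let α_{m+1} be a generator of P_{m+1}, let C_m ⊆ U_m ∩ {c ∈ O_F : |c| ≤ c₁|α_{m+1}|, |σ(c)| ≤ c₂|σ(α_{m+1})|} contain a representative of every nonzero residue class of O_F modulo P_{m+1}, and let G_m = {g} with g ∈ U_m, |g| ≤ δ·N(P_{m+1})^(1/8) and |σ(g)| ≤ δ·N(P_{m+1})^(1/8). If N(P_{m+1}) > (δ√(c₁c₂)/2 + √(c₁c₂δ²/4 + √(c₁c₂)))⁸, then C_mG_m ⊆ C_m·U′₁: for every c ∈ C_m there exist c̃ ∈ C_m and u ∈ U′₁ with c·g = c̃·u. -/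
/-! Given `c`, pick `c̃ ∈ C_m` with `c g ≡ c̃ (mod α)` and write `c g - c̃ = w α`. The size bounds on
`c`, `c̃` and `g` give `|w| ≤ c₁ (δ N^{1/8} + 1)` and `|σ w| ≤ c₂ (δ N^{1/8} + 1)`, where
`N = N(P_{m+1})`. Since `N(w) = |w|² |σ w|²`, the lower bound on `N` forces `N(w) < N`, so every
prime dividing `w` has norm less than `N` and therefore lies in `S_m`. Thus `w` is an `S_m`-unit
and `u = c g / c̃ = 1 + α (w / c̃)` is one of the generators of `U′₁`.

The norm formula holds because `x ↦ x, x̄, σ x, σ x̄` are four embeddings of the quartic field `F`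
into `ℂ` which are pairwise distinct, as they already differ on the generator. -/

open IntermediateField NumberField

noncomputable section

/-- `x` is an `S`-unit of `F`: `x ≠ 0` and `x` has valuation zero at every nonzero prime
ideal of `O_F` not belonging to `S`. -/
def IsSUnit {B D : ℕ} (S : Set (Ideal (𝓞 (qF B D)))) (x : qF B D) : Prop :=
  x ≠ 0 ∧ ∀ P : Ideal (𝓞 (qF B D)), P.IsPrime → P ≠ ⊥ → P ∉ S →
    ∃ u v : 𝓞 (qF B D), u ∉ P ∧ v ∉ P ∧ x * (v : qF B D) = (u : qF B D)

lemma Algebra.norm_eq_prod_of_injective {F K E ι : Type*} [Field F] [Field K] [Field E]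
    [Algebra F K] [Algebra F E] [FiniteDimensional F K] [Algebra.IsSeparable F K]
    [IsAlgClosed E] [Fintype ι] {f : ι → (K →ₐ[F] E)} (hf : Function.Injective f)
    (hcard : Module.finrank F K ≤ Fintype.card ι) (x : K) :
    algebraMap F E (Algebra.norm F x) = ∏ i, f i x := by
  have hbij : Function.Bijective f := (Fintype.bijective_iff_injective_and_card f).2
    ⟨hf, le_antisymm (Fintype.card_le_of_injective f hf) (by rwa [AlgHom.card])⟩
  rw [Algebra.norm_eq_prod_embeddings]
  exact (Fintype.prod_bijective f hbij _ _ fun _ => rfl).symm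

lemma Ideal.natCard_quotient_le_of_le {S : Type*} [CommRing S] [IsDedekindDomain S]
    [Module.Free ℤ S] [Module.Finite ℤ S] {I J : Ideal S}
    (hI : I ≠ ⊥) (h : I ≤ J) : Nat.card (S ⧸ J) ≤ Nat.card (S ⧸ I) := by
  simp only [← Submodule.cardQuot_apply, ← Ideal.absNorm_apply]
  exact Nat.le_of_dvd (Nat.pos_of_ne_zero (Ideal.absNorm_eq_zero_iff.not.2 hI))
    (Ideal.absNorm_dvd_absNorm_of_le h)

lemma NumberField.natCard_quotient_span_eq_abs_norm {K : Type*} [Field K] [NumberField K]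
    (w : 𝓞 K) : (Nat.card (𝓞 K ⧸ Ideal.span {w}) : ℚ) = |Algebra.norm ℚ (w : K)| := by
  rw [← Submodule.cardQuot_apply, ← Ideal.absNorm_apply, Ideal.absNorm_span_singleton,
    Nat.cast_natAbs, ← Algebra.coe_norm_int]
  push_cast
  rfl

lemma norm_le_of_mul_eq_mul_sub {𝕜 : Type*} [NormedDivisionRing 𝕜] {w a c g d : 𝕜} {K G : ℝ}
    (ha : a ≠ 0) (h : w * a = c * g - d) (hc : ‖c‖ ≤ K * ‖a‖) (hg : ‖g‖ ≤ G)
    (hd : ‖d‖ ≤ K * ‖a‖) : ‖w‖ ≤ K * (G + 1) := by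
  have : ‖w‖ * ‖a‖ ≤ K * (G + 1) * ‖a‖ :=
    calc ‖w‖ * ‖a‖ = ‖c * g - d‖ := by rw [← norm_mul, h]
      _ ≤ ‖c‖ * ‖g‖ + ‖d‖ := (norm_sub_le _ _).trans_eq (by rw [norm_mul])
      _ ≤ K * ‖a‖ * G + K * ‖a‖ :=
        add_le_add (mul_le_mul hc hg (norm_nonneg _) ((norm_nonneg c).trans hc)) hd
      _ = K * (G + 1) * ‖a‖ := by ring
  exact le_of_mul_le_mul_right this (norm_pos_iff.2 ha)

/-- `x` exceeds the larger root of `X² - δ√c X - √c`. -/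
lemma sqrt_mul_add_one_lt_sq {c δ x : ℝ} (hc : 0 ≤ c)
    (hx : δ * √c / 2 + √(c * δ ^ 2 / 4 + √c) < x) : √c * (δ * x + 1) < x ^ 2 := by
  have hk := Real.sq_sqrt hc
  have hr := Real.sq_sqrt (show 0 ≤ c * δ ^ 2 / 4 + √c by positivity)
  have hr0 := Real.sqrt_nonneg (c * δ ^ 2 / 4 + √c)
  nlinarith [mul_self_lt_mul_self hr0 (show √(c * δ ^ 2 / 4 + √c) < x - δ * √c / 2 by linarith)]

namespace qF

open Polynomial

variable {B D : ℕ}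

lemma qβ_sq (B D : ℕ) : qβ B D ^ 2 = -(((D + B * √D : ℝ)) : ℂ) := by
  rw [qβ, mul_pow, Complex.I_sq, ← Complex.ofReal_pow, Real.sq_sqrt (by positivity)]
  ring

/-- `qβ B D` is a root since `qβ² + D = -B√D`. -/
def qβPoly (B D : ℕ) : ℚ[X] := (X ^ 2 + C (D : ℚ)) ^ 2 - C ((B : ℚ) ^ 2 * D)

lemma qβPoly_monic (B D : ℕ) : (qβPoly B D).Monic := by
  unfold qβPoly; monicity!

lemma qβPoly_natDegree_le (B D : ℕ) : (qβPoly B D).natDegree ≤ 4 := by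
  unfold qβPoly; compute_degree

lemma aeval_qβPoly (B D : ℕ) : aeval (qβ B D) (qβPoly B D) = 0 := by
  have hD : (√D : ℂ) ^ 2 = D := by
    rw [← Complex.ofReal_pow, Real.sq_sqrt (by positivity), Complex.ofReal_natCast]
  simp only [qβPoly, map_sub, map_pow, map_add, aeval_X, aeval_C, eq_ratCast, qβ_sq]
  push_cast
  linear_combination (B : ℂ) ^ 2 * hD

lemma isIntegral_qβ (B D : ℕ) : IsIntegral ℚ (qβ B D) :=
  ⟨_, qβPoly_monic B D, by rw [← aeval_def]; exact aeval_qβPoly B D⟩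

instance : FiniteDimensional ℚ (qF B D) :=
  adjoin.finiteDimensional (isIntegral_qβ B D)

instance : NumberField (qF B D) where

lemma finrank_le_four (B D : ℕ) : Module.finrank ℚ (qF B D) ≤ 4 := by
  rw [qF, adjoin.finrank (isIntegral_qβ B D)]
  exact (natDegree_le_of_dvd (minpoly.dvd _ _ (aeval_qβPoly B D))
    (qβPoly_monic B D).ne_zero).trans (qβPoly_natDegree_le B D)

lemma sub_mul_sqrt_pos {B C D : ℕ} (hC : 0 < C) (hD : D = B ^ 2 + C ^ 2) :
    0 < (D : ℝ) - B * √D := by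
  have hDpos : (0 : ℝ) < D := by rw [hD]; positivity
  have hBD : (B : ℝ) < √D := by
    rw [Real.lt_sqrt (Nat.cast_nonneg B)]
    exact_mod_cast (show B ^ 2 < D by rw [hD]; have := pow_pos hC 2; omega)
  nlinarith [Real.mul_self_sqrt hDpos.le, Real.sqrt_pos.2 hDpos]

lemma sqrt_sub_lt_sqrt_add {B C D : ℕ} (hB : 0 < B) (hC : 0 < C) (hD : D = B ^ 2 + C ^ 2) :
    √((D : ℝ) - B * √D) < √((D : ℝ) + B * √D) := by
  have hDpos : (0 : ℝ) < D := by rw [hD]; positivity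
  have : (0 : ℝ) < B * √D := mul_pos (by exact_mod_cast hB) (Real.sqrt_pos.2 hDpos)
  exact Real.sqrt_lt_sqrt (sub_mul_sqrt_pos hC hD).le (by linarith)

def conjQ : ℂ →ₐ[ℚ] ℂ := (Complex.conjAe.restrictScalars ℚ).toAlgHom

def embeddings (σ : qF B D ≃ₐ[ℚ] qF B D) : Fin 4 → (qF B D →ₐ[ℚ] ℂ) :=
  ![(qF B D).val, conjQ.comp (qF B D).val, (qF B D).val.comp σ.toAlgHom,
    conjQ.comp ((qF B D).val.comp σ.toAlgHom)]

lemma embeddings_apply (σ : qF B D ≃ₐ[ℚ] qF B D) (x : qF B D) (i : Fin 4) :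
    embeddings σ i x = ![(x : ℂ), (starRingEnd ℂ) x, (σ x : ℂ), (starRingEnd ℂ) (σ x : ℂ)] i := by
  fin_cases i <;> rfl

lemma embeddings_injective {C : ℕ} (hB : 0 < B) (hC : 0 < C) (hD : D = B ^ 2 + C ^ 2)
    (σ : qF B D ≃ₐ[ℚ] qF B D)
    (hσ : ((σ ⟨qβ B D, mem_adjoin_simple_self ℚ (qβ B D)⟩ : qF B D) : ℂ) = -(qβ₃ B D)) :
    Function.Injective (embeddings σ) := by
  have hb := Real.sqrt_pos.2 (sub_mul_sqrt_pos hC hD)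
  have hba := sqrt_sub_lt_sqrt_add hB hC hD
  set β : qF B D := ⟨qβ B D, mem_adjoin_simple_self ℚ (qβ B D)⟩
  have hβ : (β : ℂ) = qβ B D := rfl
  intro i j hij
  have him := congrArg (fun φ => (φ β).im) hij
  simp only [embeddings_apply, hσ, hβ] at him
  fin_cases i <;> fin_cases j <;> simp [qβ, qβ₃] at him ⊢ <;> linarith

lemma norm_eq {C : ℕ} (hB : 0 < B) (hC : 0 < C) (hD : D = B ^ 2 + C ^ 2)
    (σ : qF B D ≃ₐ[ℚ] qF B D)
    (hσ : ((σ ⟨qβ B D, mem_adjoin_simple_self ℚ (qβ B D)⟩ : qF B D) : ℂ) = -(qβ₃ B D))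
    (x : qF B D) :
    (Algebra.norm ℚ x : ℝ) = (qAbs x * qAbs (σ x)) ^ 2 := by
  have h := Algebra.norm_eq_prod_of_injective (embeddings_injective hB hC hD σ hσ)
    (by simpa using finrank_le_four B D) x
  simp only [Fin.prod_univ_four, embeddings_apply, eq_ratCast, Matrix.cons_val] at h
  apply Complex.ofReal_injective
  push_cast
  rw [h, qAbs, qAbs, mul_pow, ← Complex.mul_conj', ← Complex.mul_conj']
  ring

lemma natCard_quotient_span_eq {C : ℕ} (hB : 0 < B) (hC : 0 < C) (hD : D = B ^ 2 + C ^ 2)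
    (σ : qF B D ≃ₐ[ℚ] qF B D)
    (hσ : ((σ ⟨qβ B D, mem_adjoin_simple_self ℚ (qβ B D)⟩ : qF B D) : ℂ) = -(qβ₃ B D))
    (w : 𝓞 (qF B D)) :
    (Nat.card (𝓞 (qF B D) ⧸ Ideal.span {w}) : ℝ) = (qAbs (w : qF B D) * qAbs (σ w)) ^ 2 := by
  have h := congrArg ((↑) : ℚ → ℝ) (natCard_quotient_span_eq_abs_norm w)
  rwa [Rat.cast_natCast, Rat.cast_abs, norm_eq hB hC hD σ hσ, abs_of_nonneg (sq_nonneg _)] at h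

lemma qAbs_le_of_mul_eq_mul_sub {w a c g d : qF B D} {K G : ℝ} (ha : a ≠ 0)
    (h : w * a = c * g - d) (hc : qAbs c ≤ K * qAbs a) (hg : qAbs g ≤ G)
    (hd : qAbs d ≤ K * qAbs a) : qAbs w ≤ K * (G + 1) :=
  norm_le_of_mul_eq_mul_sub (by exact_mod_cast ha) (by exact_mod_cast congrArg Subtype.val h)
    hc hg hd

lemma natCard_quotient_span_lt {C : ℕ} (hB : 0 < B) (hC : 0 < C) (hD : D = B ^ 2 + C ^ 2)
    (σ : qF B D ≃ₐ[ℚ] qF B D)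
    (hσ : ((σ ⟨qβ B D, mem_adjoin_simple_self ℚ (qβ B D)⟩ : qF B D) : ℂ) = -(qβ₃ B D))
    {c₁ c₂ δ N : ℝ} (hc₁ : 0 < c₁) (hc₂ : 0 < c₂) (hN : 0 ≤ N)
    (hbig : (δ * √(c₁ * c₂) / 2 + √(c₁ * c₂ * δ ^ 2 / 4 + √(c₁ * c₂))) ^ 8 < N)
    {w : 𝓞 (qF B D)} (hw : qAbs (w : qF B D) ≤ c₁ * (δ * N ^ ((1 : ℝ) / 8) + 1))
    (hσw : qAbs (σ w) ≤ c₂ * (δ * N ^ ((1 : ℝ) / 8) + 1)) :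
    (Nat.card (𝓞 (qF B D) ⧸ Ideal.span {w}) : ℝ) < N := by
  set x := N ^ ((1 : ℝ) / 8)
  set y := δ * x + 1
  have hx8 : x ^ 8 = N := by
    rw [← Real.rpow_natCast, ← Real.rpow_mul hN]
    norm_num
  have hy : 0 ≤ y := (mul_nonneg_iff_of_pos_left hc₁).1 ((norm_nonneg _).trans hw)
  have hlt : √(c₁ * c₂) * y < x ^ 2 := sqrt_mul_add_one_lt_sq (by positivity)
    (lt_of_pow_lt_pow_left₀ 8 (by positivity) (hx8.symm ▸ hbig))
  calc (Nat.card (𝓞 (qF B D) ⧸ Ideal.span {w}) : ℝ) = (qAbs (w : qF B D) * qAbs (σ w)) ^ 2 :=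
        natCard_quotient_span_eq hB hC hD σ hσ w
    _ ≤ (c₁ * y * (c₂ * y)) ^ 2 := pow_le_pow_left₀ (mul_nonneg (norm_nonneg _) (norm_nonneg _))
        (mul_le_mul hw hσw (norm_nonneg _) (by positivity)) 2
    _ = (√(c₁ * c₂) * y) ^ 4 := by
        rw [show (√(c₁ * c₂) * y) ^ 4 = √(c₁ * c₂) ^ 2 * √(c₁ * c₂) ^ 2 * y ^ 4 by ring,
          Real.sq_sqrt (by positivity)]
        ring
    _ < (x ^ 2) ^ 4 := by gcongr
    _ = N := by rw [← hx8]; ring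

end qF

namespace IsSUnit

variable {B D : ℕ} {S : Set (Ideal (𝓞 (qF B D)))} {x y : qF B D}

lemma mul (hx : IsSUnit S x) (hy : IsSUnit S y) : IsSUnit S (x * y) := by
  refine ⟨mul_ne_zero hx.1 hy.1, fun Q hQ hQb hQS => ?_⟩
  obtain ⟨u₁, v₁, hu₁, hv₁, he₁⟩ := hx.2 Q hQ hQb hQS
  obtain ⟨u₂, v₂, hu₂, hv₂, he₂⟩ := hy.2 Q hQ hQb hQS
  refine ⟨u₁ * u₂, v₁ * v₂, fun h => (hQ.mem_or_mem h).elim hu₁ hu₂,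
    fun h => (hQ.mem_or_mem h).elim hv₁ hv₂, ?_⟩
  push_cast
  linear_combination (y * v₂) * he₁ + (u₁ : qF B D) * he₂

lemma div (hx : IsSUnit S x) (hy : IsSUnit S y) : IsSUnit S (x / y) := by
  refine ⟨div_ne_zero hx.1 hy.1, fun Q hQ hQb hQS => ?_⟩
  obtain ⟨u₁, v₁, hu₁, hv₁, he₁⟩ := hx.2 Q hQ hQb hQS
  obtain ⟨u₂, v₂, hu₂, hv₂, he₂⟩ := hy.2 Q hQ hQb hQS
  refine ⟨u₁ * v₂, v₁ * u₂, fun h => (hQ.mem_or_mem h).elim hu₁ hv₂,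
    fun h => (hQ.mem_or_mem h).elim hv₁ hu₂, ?_⟩
  push_cast
  field_simp [hy.1]
  linear_combination (u₂ : qF B D) * he₁ - (u₁ : qF B D) * he₂

end IsSUnit

lemma isSUnit_coe_iff {B D : ℕ} {S : Set (Ideal (𝓞 (qF B D)))} {w : 𝓞 (qF B D)} :
    IsSUnit S (w : qF B D) ↔
      w ≠ 0 ∧ ∀ Q : Ideal (𝓞 (qF B D)), Q.IsPrime → Q ≠ ⊥ → Q ∉ S → w ∉ Q := by
  refine ⟨fun h => ⟨RingOfIntegers.coe_ne_zero_iff.1 h.1, fun Q hQ hQb hQS hwQ => ?_⟩,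
    fun h => ⟨RingOfIntegers.coe_ne_zero_iff.2 h.1, fun Q hQ hQb hQS =>
      ⟨w, 1, h.2 Q hQ hQb hQS, (Ideal.ne_top_iff_one Q).1 hQ.ne_top, by simp⟩⟩⟩
  obtain ⟨u, v, hu, -, he⟩ := h.2 Q hQ hQb hQS
  have : w * v = u := RingOfIntegers.coe_injective (by exact_mod_cast he)
  exact hu (this ▸ Q.mul_mem_right v hwQ)

lemma isSUnit_of_natCard_quotient_lt {B D : ℕ} {P : ℕ → Ideal (𝓞 (qF B D))}
    (hPsurj : ∀ Q : Ideal (𝓞 (qF B D)), Q.IsPrime → Q ≠ ⊥ → ∃ i, 1 ≤ i ∧ P i = Q)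
    (hPmono : ∀ i j, 1 ≤ i → i ≤ j →
      Nat.card (𝓞 (qF B D) ⧸ P i) ≤ Nat.card (𝓞 (qF B D) ⧸ P j))
    {m : ℕ} {w : 𝓞 (qF B D)} (hw : w ≠ 0)
    (hlt : Nat.card (𝓞 (qF B D) ⧸ Ideal.span {w}) < Nat.card (𝓞 (qF B D) ⧸ P (m + 1))) :
    IsSUnit {Q | ∃ i, 1 ≤ i ∧ i ≤ m ∧ Q = P i} (w : qF B D) := by
  refine isSUnit_coe_iff.2 ⟨hw, fun Q hQ hQb hQS hwQ => ?_⟩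
  obtain ⟨i, hi, rfl⟩ := hPsurj Q hQ hQb
  have hmi : m + 1 ≤ i := by
    by_contra! h
    exact hQS ⟨i, hi, by omega, rfl⟩
  have hle := Ideal.natCard_quotient_le_of_le (Ideal.span_singleton_eq_bot.not.2 hw)
    ((Ideal.span_singleton_le_iff_mem _).2 hwQ)
  exact (hlt.trans_le ((hPmono _ _ le_add_self hmi).trans hle)).false

lemma notMem_succ_of_isSUnit {B D : ℕ} {P : ℕ → Ideal (𝓞 (qF B D))}
    (hPprime : ∀ i, 1 ≤ i → (P i).IsPrime ∧ P i ≠ ⊥)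
    (hPinj : ∀ i j, 1 ≤ i → 1 ≤ j → P i = P j → i = j)
    {m : ℕ} {w : 𝓞 (qF B D)} (hw : IsSUnit {Q | ∃ i, 1 ≤ i ∧ i ≤ m ∧ Q = P i} (w : qF B D)) :
    w ∉ P (m + 1) := by
  refine (isSUnit_coe_iff.1 hw).2 _ (hPprime _ le_add_self).1 (hPprime _ le_add_self).2 ?_
  rintro ⟨i, hi, him, he⟩
  have := hPinj _ _ le_add_self hi he
  omega

theorem statement16_general (B C D : ℕ) (hB : 0 < B) (hC : 0 < C) (hD : D = B ^ 2 + C ^ 2)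
    (σ : qF B D ≃ₐ[ℚ] qF B D)
    (hσ : ((σ ⟨qβ B D, mem_adjoin_simple_self ℚ (qβ B D)⟩ : qF B D) : ℂ) = -(qβ₃ B D))
    (c₁ c₂ : ℝ) (hc₁ : 0 < c₁) (hc₂ : 0 < c₂)
    (P : ℕ → Ideal (𝓞 (qF B D)))
    (hPprime : ∀ i, 1 ≤ i → (P i).IsPrime ∧ P i ≠ ⊥)
    (hPinj : ∀ i j, 1 ≤ i → 1 ≤ j → P i = P j → i = j)
    (hPsurj : ∀ Q : Ideal (𝓞 (qF B D)), Q.IsPrime → Q ≠ ⊥ → ∃ i, 1 ≤ i ∧ P i = Q)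
    (hPmono : ∀ i j, 1 ≤ i → i ≤ j →
      Nat.card (𝓞 (qF B D) ⧸ P i) ≤ Nat.card (𝓞 (qF B D) ⧸ P j))
    (m : ℕ)
    (δ : ℝ)
    (αm : 𝓞 (qF B D)) (hαm : P (m + 1) = Ideal.span {αm})
    (Cm : Set (𝓞 (qF B D)))
    (hCsub : ∀ c ∈ Cm,
      IsSUnit {Q | ∃ i, 1 ≤ i ∧ i ≤ m ∧ Q = P i} ((c : qF B D)) ∧
      qAbs ((c : qF B D)) ≤ c₁ * qAbs ((αm : qF B D)) ∧
      qAbs (σ ((c : qF B D))) ≤ c₂ * qAbs (σ ((αm : qF B D))))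
    (hCrep : ∀ x : 𝓞 (qF B D), x ∉ P (m + 1) → ∃ c ∈ Cm, x - c ∈ P (m + 1))
    (g : 𝓞 (qF B D))
    (hg : IsSUnit {Q | ∃ i, 1 ≤ i ∧ i ≤ m ∧ Q = P i} ((g : qF B D)))
    (hgabs : qAbs ((g : qF B D)) ≤
      δ * (Nat.card (𝓞 (qF B D) ⧸ P (m + 1)) : ℝ) ^ ((1 : ℝ) / 8))
    (hσgabs : qAbs (σ ((g : qF B D))) ≤
      δ * (Nat.card (𝓞 (qF B D) ⧸ P (m + 1)) : ℝ) ^ ((1 : ℝ) / 8))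
    (hbig : (δ * Real.sqrt (c₁ * c₂) / 2 +
        Real.sqrt (c₁ * c₂ * δ ^ 2 / 4 + Real.sqrt (c₁ * c₂))) ^ 8 <
      (Nat.card (𝓞 (qF B D) ⧸ P (m + 1)) : ℝ)) :
    ∀ c ∈ Cm, ∃ ct ∈ Cm, ∃ u : (qF B D)ˣ,
      u ∈ Subgroup.closure {u : (qF B D)ˣ |
        IsSUnit {Q | ∃ i, 1 ≤ i ∧ i ≤ m ∧ Q = P i} ((u : qF B D)) ∧
        ∃ t : qF B D, IsSUnit {Q | ∃ i, 1 ≤ i ∧ i ≤ m ∧ Q = P i} t ∧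
          (u : qF B D) = 1 + ((αm : 𝓞 (qF B D)) : qF B D) * t} ∧
      ((c : 𝓞 (qF B D)) : qF B D) * ((g : 𝓞 (qF B D)) : qF B D) =
        ((ct : 𝓞 (qF B D)) : qF B D) * (u : qF B D) := by
  intro c hcC
  obtain ⟨hcS, hcabs, hσcabs⟩ := hCsub c hcC
  obtain ⟨ct, hctC, hmem⟩ :=
    hCrep (c * g) (notMem_succ_of_isSUnit hPprime hPinj (by exact_mod_cast hcS.mul hg))
  obtain ⟨hctS, hctabs, hσctabs⟩ := hCsub ct hctC
  obtain ⟨w, hw⟩ := Ideal.mem_span_singleton'.1 (hαm ▸ hmem)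
  have hwF : (w : qF B D) * αm = c * g - ct := by exact_mod_cast congrArg ((↑) : _ → qF B D) hw
  have hα : (αm : qF B D) ≠ 0 := by
    intro h
    exact (hPprime _ le_add_self).2 (by rw [hαm, RingOfIntegers.coe_eq_zero_iff.1 h, Ideal.span_singleton_eq_bot])
  refine ⟨ct, hctC, Units.mk0 _ (div_ne_zero (mul_ne_zero hcS.1 hg.1) hctS.1), ?_,
    by simp [mul_div_cancel₀ _ hctS.1]⟩
  rcases eq_or_ne w 0 with rfl | hw0
  · have hcg_eq : (c : qF B D) * g = ct := sub_eq_zero.1 (by simpa using hwF.symm)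
    convert Subgroup.one_mem _
    ext
    simp [hcg_eq, hctS.1]
  have hwS := isSUnit_of_natCard_quotient_lt hPsurj hPmono hw0 <| by
    exact_mod_cast qF.natCard_quotient_span_lt hB hC hD σ hσ hc₁ hc₂ (Nat.cast_nonneg _) hbig
      (qF.qAbs_le_of_mul_eq_mul_sub hα hwF hcabs hgabs hctabs)
      (qF.qAbs_le_of_mul_eq_mul_sub ((map_ne_zero σ).2 hα)
        (by simpa using congrArg σ hwF) hσcabs hσgabs hσctabs)
  refine Subgroup.subset_closure ⟨(hcS.mul hg).div hctS, w / ct, hwS.div hctS, ?_⟩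
  simp only [Units.val_mk0]
  field_simp [hctS.1]
  linear_combination -hwF

/-- condition II holds below the theoretical bound.  Let `δ > 0`, let
`αm` generate `P (m+1)`, let `C_m` be a set of `S_m`-units of `O_F` bounded by
`|c| ≤ c₁|αm|`, `|σ(c)| ≤ c₂|σ(αm)|` containing a representative of every nonzero residue
class mod `P (m+1)`, and let `G_m = {g}` with `g ∈ U_m`, `|g| ≤ δ·N(P (m+1))^(1/8)` and
`|σ(g)| ≤ δ·N(P (m+1))^(1/8)`.  If
`N(P (m+1)) > (δ√(c₁c₂)/2 + √(c₁c₂δ²/4 + √(c₁c₂)))⁸`, then for every `c ∈ C_m` there are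
`c̃ ∈ C_m` and `u ∈ U′₁` with `c·g = c̃·u`. -/
theorem statement16 (B C D : ℕ) (hB : 0 < B) (hC : 0 < C) (hD : D = B ^ 2 + C ^ 2)
    (hsf : Squarefree D)
    (σ : qF B D ≃ₐ[ℚ] qF B D)
    (hσ : ((σ ⟨qβ B D, mem_adjoin_simple_self ℚ (qβ B D)⟩ : qF B D) : ℂ) = -(qβ₃ B D))
    (hPID : ∀ I : Ideal (𝓞 (qF B D)), I.IsPrincipal)
    (c₁ c₂ : ℝ) (hc₁ : 0 < c₁) (hc₂ : 0 < c₂)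
    (hc : ∀ α x : 𝓞 (qF B D), α ≠ 0 →
      ∃ y : 𝓞 (qF B D),
        qAbs (((x - α * y : 𝓞 (qF B D)) : qF B D)) ≤ c₁ * qAbs ((α : qF B D)) ∧
        qAbs (σ ((x - α * y : 𝓞 (qF B D)) : qF B D)) ≤ c₂ * qAbs (σ ((α : qF B D))))
    (P : ℕ → Ideal (𝓞 (qF B D)))
    (hPprime : ∀ i, 1 ≤ i → (P i).IsPrime ∧ P i ≠ ⊥)
    (hPinj : ∀ i j, 1 ≤ i → 1 ≤ j → P i = P j → i = j)
    (hPsurj : ∀ Q : Ideal (𝓞 (qF B D)), Q.IsPrime → Q ≠ ⊥ → ∃ i, 1 ≤ i ∧ P i = Q)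
    (hPmono : ∀ i j, 1 ≤ i → i ≤ j →
      Nat.card (𝓞 (qF B D) ⧸ P i) ≤ Nat.card (𝓞 (qF B D) ⧸ P j))
    (m : ℕ)
    (δ : ℝ) (hδ : 0 < δ)
    (αm : 𝓞 (qF B D)) (hαm : P (m + 1) = Ideal.span {αm})
    (Cm : Set (𝓞 (qF B D)))
    (hCsub : ∀ c ∈ Cm,
      IsSUnit {Q | ∃ i, 1 ≤ i ∧ i ≤ m ∧ Q = P i} ((c : qF B D)) ∧
      qAbs ((c : qF B D)) ≤ c₁ * qAbs ((αm : qF B D)) ∧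
      qAbs (σ ((c : qF B D))) ≤ c₂ * qAbs (σ ((αm : qF B D))))
    (hCrep : ∀ x : 𝓞 (qF B D), x ∉ P (m + 1) → ∃ c ∈ Cm, x - c ∈ P (m + 1))
    (g : 𝓞 (qF B D))
    (hg : IsSUnit {Q | ∃ i, 1 ≤ i ∧ i ≤ m ∧ Q = P i} ((g : qF B D)))
    (hgabs : qAbs ((g : qF B D)) ≤
      δ * (Nat.card (𝓞 (qF B D) ⧸ P (m + 1)) : ℝ) ^ ((1 : ℝ) / 8))
    (hσgabs : qAbs (σ ((g : qF B D))) ≤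
      δ * (Nat.card (𝓞 (qF B D) ⧸ P (m + 1)) : ℝ) ^ ((1 : ℝ) / 8))
    (hbig : (δ * Real.sqrt (c₁ * c₂) / 2 +
        Real.sqrt (c₁ * c₂ * δ ^ 2 / 4 + Real.sqrt (c₁ * c₂))) ^ 8 <
      (Nat.card (𝓞 (qF B D) ⧸ P (m + 1)) : ℝ)) :
    ∀ c ∈ Cm, ∃ ct ∈ Cm, ∃ u : (qF B D)ˣ,
      u ∈ Subgroup.closure {u : (qF B D)ˣ |
        IsSUnit {Q | ∃ i, 1 ≤ i ∧ i ≤ m ∧ Q = P i} ((u : qF B D)) ∧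
        ∃ t : qF B D, IsSUnit {Q | ∃ i, 1 ≤ i ∧ i ≤ m ∧ Q = P i} t ∧
          (u : qF B D) = 1 + ((αm : 𝓞 (qF B D)) : qF B D) * t} ∧
      ((c : 𝓞 (qF B D)) : qF B D) * ((g : 𝓞 (qF B D)) : qF B D) =
        ((ct : 𝓞 (qF B D)) : qF B D) * (u : qF B D) :=
  statement16_general B C D hB hC hD σ hσ c₁ c₂ hc₁ hc₂ P hPprime hPinj hPsurj hPmono m δ αm hαm Cm
    hCsub hCrep g hg hgabs hσgabs hbig
end
end
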